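/- arXiv:1812.09353 — 6 statements merged into one kernel-verified Lean document; each statement's English description precedes it below -/
import Mathlib

section
/- Let G be a finite simple graph and let Q be a 3-path partition of G that has the least 1-paths and such that no three distinct 2-paths of Q can be connected into a 6-path, i.e., there is no path of order 6 in G whose edge set contains the edges of three distinct 2-paths of Q. Suppose u-v, u'-v', u''-v'' are three distinct 2-paths of Q, the pairs (v, v') and (v', v'') are edges of G, and w is a vertex of G with (u, w) an edge of G and w ∉ {v, v', v''}. Then w lies on a 3-path of Q. -/
/-- A nonempty list of distinct vertices consecutively adjacent in `G`,
i.e. a simple path in `G` given by its list of vertices; its *order* is its length. -/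
def SimpleGraph.IsPathList {V : Type*} (G : SimpleGraph V) (l : List V) : Prop :=
  l ≠ [] ∧ l.Nodup ∧ l.Chain' G.Adj

/-- `Q` is a `k`-path partition of `G`: a collection of vertex-disjoint paths of `G`,
each of order at most `k`, whose vertex sets partition the vertex set. -/
def SimpleGraph.IsPathPartition {V : Type*} (G : SimpleGraph V) (k : ℕ)
    (Q : Finset (List V)) : Prop :=
  (∀ l ∈ Q, G.IsPathList l ∧ l.length ≤ k) ∧ ∀ v : V, ∃! l, l ∈ Q ∧ v ∈ l

/-- `Q` has the least number of `1`-paths among all `3`-path partitions of `G`. -/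
def SimpleGraph.HasLeastOnePaths {V : Type*} (G : SimpleGraph V)
    (Q : Finset (List V)) : Prop :=
  ∀ Q' : Finset (List V), G.IsPathPartition 3 Q' →
    (Q.filter fun l => l.length = 1).card ≤ (Q'.filter fun l => l.length = 1).card

/-- `Q` is locally optimal: there is no subcollection `S` of at most six paths of `Q`,
each of order `2` or `3`, together with a collection `S'` of fewer than `|S|`
vertex-disjoint paths of `G`, each of order `2` or `3`, covering exactly the same
vertices as `S`. -/
def SimpleGraph.LocallyOptimal {V : Type*} [DecidableEq V] (G : SimpleGraph V)
    (Q : Finset (List V)) : Prop :=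
  ¬ ∃ S S' : Finset (List V),
      S ⊆ Q ∧ S.card ≤ 6 ∧ (∀ l ∈ S, l.length = 2 ∨ l.length = 3) ∧
      S'.card < S.card ∧
      (∀ l ∈ S', G.IsPathList l ∧ (l.length = 2 ∨ l.length = 3)) ∧
      (∀ l ∈ S', ∀ l' ∈ S', l ≠ l' → ∀ v, v ∈ l → v ∉ l') ∧
      S'.biUnion List.toFinset = S.biUnion List.toFinset

/-- The list of consecutive (directed) edges along a path given by its vertex list. -/
def listEdges {V : Type*} (l : List V) : List (V × V) := l.zip l.tail

/-- The hypothesis that no three distinct 2-paths of `Q` can be connected into a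
6-path: there is no path of order 6 in `G` whose edge set contains the edges of
three distinct 2-paths of `Q`. -/
def NoSixPath {V : Type*} (G : SimpleGraph V) (Q : Finset (List V)) : Prop :=
  ¬ ∃ l p1 p2 p3 : List V, G.IsPathList l ∧ l.length = 6 ∧
      p1 ∈ Q ∧ p2 ∈ Q ∧ p3 ∈ Q ∧
      p1.length = 2 ∧ p2.length = 2 ∧ p3.length = 2 ∧
      p1 ≠ p2 ∧ p1 ≠ p3 ∧ p2 ≠ p3 ∧
      ∀ p ∈ [p1, p2, p3], ∀ e ∈ listEdges p,
        e ∈ listEdges l ∨ e.swap ∈ listEdges l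

lemma no6_helper {V : Type*} {G : SimpleGraph V} {Q : Finset (List V)}
    (hno6 : NoSixPath G Q) {x1 x2 x3 x4 x5 x6 : V}
    (hnd : ([x1,x2,x3,x4,x5,x6] : List V).Nodup)
    (hch : List.Chain' G.Adj [x1,x2,x3,x4,x5,x6])
    {p1 p2 p3 : List V} (hp1 : p1 ∈ Q) (hp2 : p2 ∈ Q) (hp3 : p3 ∈ Q)
    (hl1 : p1.length = 2) (hl2 : p2.length = 2) (hl3 : p3.length = 2)
    (h12 : p1 ≠ p2) (h13 : p1 ≠ p3) (h23 : p2 ≠ p3)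
    (he : ∀ p ∈ [p1,p2,p3], ∀ e ∈ listEdges p,
        e ∈ listEdges [x1,x2,x3,x4,x5,x6] ∨ e.swap ∈ listEdges [x1,x2,x3,x4,x5,x6]) : False :=
  hno6 ⟨_, p1, p2, p3, ⟨by simp, hnd, hch⟩, by simp, hp1, hp2, hp3, hl1, hl2, hl3,
    h12, h13, h23, he⟩

/-- Claim 3.3: the vertex `w` lies on a 3-path of `Q`. -/
theorem claim_w_on_three_path {V : Type*} [Fintype V] [DecidableEq V]
    (G : SimpleGraph V) (Q : Finset (List V))
    (hQ : G.IsPathPartition 3 Q)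
    (hleast : G.HasLeastOnePaths Q)
    (hno6 : NoSixPath G Q)
    (u v u' v' u'' v'' w : V)
    (h1 : [u, v] ∈ Q) (h2 : [u', v'] ∈ Q) (h3 : [u'', v''] ∈ Q)
    (h12 : [u, v] ≠ [u', v']) (h13 : [u, v] ≠ [u'', v'']) (h23 : [u', v'] ≠ [u'', v''])
    (hvv' : G.Adj v v') (hv'v'' : G.Adj v' v'')
    (huw : G.Adj u w)
    (hwv : w ≠ v) (hwv' : w ≠ v') (hwv'' : w ≠ v'') :
    ∃ p ∈ Q, p.length = 3 ∧ w ∈ p := by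
  obtain ⟨hall, huniq⟩ := hQ
  have hdisj : ∀ l1 ∈ Q, ∀ l2 ∈ Q, ∀ x : V, x ∈ l1 → x ∈ l2 → l1 = l2 := by
    intro l1 hm1 l2 hm2 x hx1 hx2
    obtain ⟨l, -, hu⟩ := huniq x
    rw [hu l1 ⟨hm1, hx1⟩, hu l2 ⟨hm2, hx2⟩]
  have hne : ∀ {l1 l2 : List V}, l1 ∈ Q → l2 ∈ Q → l1 ≠ l2 →
      ∀ x ∈ l1, ∀ y ∈ l2, x ≠ y := by
    intro l1 l2 hm1 hm2 hn x hx y hy h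
    subst h
    exact hn (hdisj _ hm1 _ hm2 x hx hy)
  have hadjuv : G.Adj u v := by simpa [List.Chain'] using (hall _ h1).1.2.2
  have hadjuv' : G.Adj u' v' := by simpa [List.Chain'] using (hall _ h2).1.2.2
  have hadjuv'' : G.Adj u'' v'' := by simpa [List.Chain'] using (hall _ h3).1.2.2
  have hwu : w ≠ u := fun h => by subst h; exact huw.ne rfl
  obtain ⟨p, ⟨hpQ, hwp⟩, hpu⟩ := huniq w
  have hplen := (hall p hpQ).2
  obtain ⟨hpne, hpnd, hpch⟩ := (hall p hpQ).1
  match p, hplen, hpne, hpnd, hpch, hwp, hpQ with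
  | [a], _, _, _, _, hwp, hpQ =>
    -- w is on a 1-path [w]: contradiction with least 1-paths
    exfalso
    have hwa : w = a := by simpa using hwp
    subst hwa
    have hwQ : [w] ∈ Q := hpQ
    set Q' : Finset (List V) := insert [w, u, v] ((Q.erase [w]).erase [u, v]) with hQ'def
    have hQ' : G.IsPathPartition 3 Q' := by
      constructor
      · intro l hl
        rcases Finset.mem_insert.1 hl with rfl | hl
        · refine ⟨⟨by simp, by simp [hwu, hwv, hadjuv.ne], ?_⟩, by simp⟩
          simp [List.Chain', List.isChain_cons_cons, huw.symm, hadjuv]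
        · exact hall l (Finset.mem_of_mem_erase (Finset.mem_of_mem_erase hl))
      · intro x
        obtain ⟨l0, ⟨hl0Q, hxl0⟩, hl0u⟩ := huniq x
        by_cases h0 : l0 = [w] ∨ l0 = [u, v]
        · refine ⟨[w, u, v], ⟨Finset.mem_insert_self _ _, ?_⟩, ?_⟩
          · rcases h0 with rfl | rfl
            · simp at hxl0; simp [hxl0]
            · simp at hxl0; rcases hxl0 with rfl | rfl <;> simp
          · rintro l ⟨hl, hxl⟩
            rcases Finset.mem_insert.1 hl with rfl | hl
            · rfl
            · exfalso
              have hlQ := Finset.mem_of_mem_erase (Finset.mem_of_mem_erase hl)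
              have heq := hl0u l ⟨hlQ, hxl⟩
              rcases h0 with rfl | rfl
              · exact (Finset.ne_of_mem_erase (Finset.mem_of_mem_erase hl)) heq
              · exact (Finset.ne_of_mem_erase hl) heq
        · push_neg at h0
          refine ⟨l0, ⟨Finset.mem_insert_of_mem
              (Finset.mem_erase.2 ⟨h0.2, Finset.mem_erase.2 ⟨h0.1, hl0Q⟩⟩), hxl0⟩, ?_⟩
          rintro l ⟨hl, hxl⟩
          rcases Finset.mem_insert.1 hl with rfl | hl
          · exfalso
            simp only [List.mem_cons, List.not_mem_nil, or_false] at hxl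
            rcases hxl with rfl | rfl | rfl
            · exact h0.1 (hl0u [x] ⟨hwQ, by simp⟩).symm
            · exact h0.2 (hl0u [x, v] ⟨h1, by simp⟩).symm
            · exact h0.2 (hl0u [u, x] ⟨h1, by simp⟩).symm
          · exact hl0u l ⟨Finset.mem_of_mem_erase (Finset.mem_of_mem_erase hl), hxl⟩
    have hcount : (Q'.filter fun l => l.length = 1).card <
        (Q.filter fun l => l.length = 1).card := by
      rw [hQ'def, Finset.filter_insert, if_neg (by simp), Finset.filter_erase,
        Finset.filter_erase, Finset.erase_eq_of_notMem (by simp)]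
      exact Finset.card_erase_lt_of_mem (Finset.mem_filter.2 ⟨hwQ, by simp⟩)
    exact absurd (hleast Q' hQ') (not_le.2 hcount)
  | [a, b], _, _, hpnd, hpch, hwp, hpQ =>
    -- w is on a 2-path: contradiction with NoSixPath
    exfalso
    have hadjab : G.Adj a b := by simpa [List.Chain'] using hpch
    by_cases hwu' : w = u'
    · -- then p = [u', v']
      subst hwu'
      refine no6_helper hno6 (x1 := v) (x2 := u) (x3 := w) (x4 := v') (x5 := v'')
        (x6 := u'') ?_ ?_ h1 h2 h3 rfl rfl rfl h12 h13 h23 ?_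
      · have n1 := hne h1 h2 h12
        have n2 := hne h1 h3 h13
        have n3 := hne h2 h3 h23
        simp only [List.mem_cons, List.not_mem_nil, or_false] at n1 n2 n3
        simp [hadjuv.ne', hadjuv'.ne, hadjuv''.ne',
          n1 u (by simp) w (by simp), n1 u (by simp) v' (by simp),
          n1 v (by simp) w (by simp), n1 v (by simp) v' (by simp),
          n2 u (by simp) u'' (by simp), n2 u (by simp) v'' (by simp),
          n2 v (by simp) u'' (by simp), n2 v (by simp) v'' (by simp),
          n3 w (by simp) u'' (by simp), n3 w (by simp) v'' (by simp),
          n3 v' (by simp) u'' (by simp), n3 v' (by simp) v'' (by simp)]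
      · simp [List.Chain', List.isChain_cons_cons, hadjuv.symm, huw, hadjuv', hvv', hv'v'', hadjuv''.symm]
      · intro q hq
        simp only [List.mem_cons, List.not_mem_nil, or_false] at hq
        rcases hq with rfl | rfl | rfl <;> · intro e he; simp [listEdges] at he ⊢; simp [he]
    · by_cases hwu'' : w = u''
      · subst hwu''
        refine no6_helper hno6 (x1 := v) (x2 := u) (x3 := w) (x4 := v'') (x5 := v')
          (x6 := u') ?_ ?_ h1 h3 h2 rfl rfl rfl h13 h12 h23.symm ?_
        · have n1 := hne h1 h2 h12
          have n2 := hne h1 h3 h13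
          have n3 := hne h2 h3 h23
          simp only [List.mem_cons, List.not_mem_nil, or_false] at n1 n2 n3
          simp [hadjuv.ne', hadjuv'.ne', hadjuv''.ne,
            n1 u (by simp) u' (by simp), n1 u (by simp) v' (by simp),
            n1 v (by simp) u' (by simp), n1 v (by simp) v' (by simp),
            n2 u (by simp) w (by simp), n2 u (by simp) v'' (by simp),
            n2 v (by simp) w (by simp), n2 v (by simp) v'' (by simp),
            n3 u' (by simp) w (by simp), n3 u' (by simp) v'' (by simp),
            n3 v' (by simp) w (by simp), n3 v' (by simp) v'' (by simp),
            hwv', hwu', hv'v''.ne', (n3 u' (by simp) v'' (by simp)).symm,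
            (n3 v' (by simp) v'' (by simp)).symm]
        · simp [List.Chain', List.isChain_cons_cons, hadjuv.symm, huw, hadjuv'', hv'v''.symm, hvv'.symm,
            hadjuv'.symm]
        · intro q hq
          simp only [List.mem_cons, List.not_mem_nil, or_false] at hq
          rcases hq with rfl | rfl | rfl <;> · intro e he; simp [listEdges] at he ⊢; simp [he]
      · -- generic case: w ∉ {u,v,u',v',u'',v''}; let x be the other endpoint of p
        have hp1 : [a, b] ≠ [u, v] := by
          intro hh
          rw [hh] at hwp
          simp only [List.mem_cons, List.not_mem_nil, or_false] at hwp
          rcases hwp with rfl | rfl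
          · exact hwu rfl
          · exact hwv rfl
        have hp2 : [a, b] ≠ [u', v'] := by
          intro hh
          rw [hh] at hwp
          simp only [List.mem_cons, List.not_mem_nil, or_false] at hwp
          rcases hwp with rfl | rfl
          · exact hwu' rfl
          · exact hwv' rfl
        have n1 := hne hpQ h1 hp1
        have n2 := hne hpQ h2 hp2
        have n3 := hne h1 h2 h12
        simp only [List.mem_cons, List.not_mem_nil, or_false] at n1 n2 n3 hwp
        rcases hwp with rfl | rfl
        · -- p = [w, b]
          refine no6_helper hno6 (x1 := b) (x2 := w) (x3 := u) (x4 := v) (x5 := v')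
            (x6 := u') ?_ ?_ hpQ h1 h2 rfl rfl rfl hp1 hp2 h12 ?_
          · have hab : w ≠ b := by simpa using hpnd
            simp [hab, hab.symm, hwu, hwv, hwv', hwu', hadjuv.ne, hadjuv'.ne',
              n1 b (by simp) u (by simp), n1 b (by simp) v (by simp),
              n2 b (by simp) u' (by simp), n2 b (by simp) v' (by simp),
              n3 u (by simp) u' (by simp), n3 u (by simp) v' (by simp),
              n3 v (by simp) u' (by simp), n3 v (by simp) v' (by simp)]
          · simp [List.Chain', List.isChain_cons_cons, hadjab.symm, huw.symm, hadjuv, hvv', hadjuv'.symm]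
          · intro q hq
            simp only [List.mem_cons, List.not_mem_nil, or_false] at hq
            rcases hq with rfl | rfl | rfl <;> · intro e he; simp [listEdges] at he ⊢; simp [he]
        · -- p = [a, w]
          refine no6_helper hno6 (x1 := a) (x2 := w) (x3 := u) (x4 := v) (x5 := v')
            (x6 := u') ?_ ?_ hpQ h1 h2 rfl rfl rfl hp1 hp2 h12 ?_
          · have hab : a ≠ w := by simpa using hpnd
            simp [hab, hwu, hwv, hwv', hwu', hadjuv.ne, hadjuv'.ne',
              n1 a (by simp) u (by simp), n1 a (by simp) v (by simp),
              n2 a (by simp) u' (by simp), n2 a (by simp) v' (by simp),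
              n3 u (by simp) u' (by simp), n3 u (by simp) v' (by simp),
              n3 v (by simp) u' (by simp), n3 v (by simp) v' (by simp)]
          · simp [List.Chain', List.isChain_cons_cons, hadjab, huw.symm, hadjuv, hvv', hadjuv'.symm]
          · intro q hq
            simp only [List.mem_cons, List.not_mem_nil, or_false] at hq
            rcases hq with rfl | rfl | rfl <;> · intro e he; simp [listEdges] at he ⊢; simp [he]
  | [a, b, c], _, _, _, _, hwp, hpQ =>
    exact ⟨[a, b, c], hpQ, rfl, hwp⟩
end

section
/- Let G be a finite simple graph and let Q be a 3-path partition of G that has the least 1-paths and such that no three distinct 2-paths of Q can be connected into a 6-path, i.e., there is no path of order 6 in G whose edge set contains the edges of three distinct 2-paths of Q. Suppose v-v'-v'' is a path of order 3 in G (so (v, v') and (v', v'') are edges of G) and u-v, u'-v', u''-v'' are three distinct 2-paths of Q. Then for each of the pairs (a, b) ∈ {(u, v), (u', v'), (u'', v'')} and every vertex w of G with (a, w) an edge of G and w ∉ {v, v', v''}, the vertex w lies on a 3-path of Q. -/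
lemma isPathList6 {V : Type*} (G : SimpleGraph V) {a b c d e f : V}
    (g1 : G.Adj a b) (g2 : G.Adj b c) (g3 : G.Adj c d) (g4 : G.Adj d e) (g5 : G.Adj e f)
    (n1 : a ≠ b) (n2 : a ≠ c) (n3 : a ≠ d) (n4 : a ≠ e) (n5 : a ≠ f)
    (n6 : b ≠ c) (n7 : b ≠ d) (n8 : b ≠ e) (n9 : b ≠ f)
    (n10 : c ≠ d) (n11 : c ≠ e) (n12 : c ≠ f)
    (n13 : d ≠ e) (n14 : d ≠ f) (n15 : e ≠ f) :
    G.IsPathList [a, b, c, d, e, f] := by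
  refine ⟨by simp, ?_, ?_⟩
  · simp [n1, n2, n3, n4, n5, n6, n7, n8, n9, n10, n11, n12, n13, n14, n15]
  · simp [List.Chain', List.isChain_cons_cons, g1, g2, g3, g4, g5]

lemma six_contra {V : Type*} (G : SimpleGraph V) (Q : Finset (List V))
    (hno6 : NoSixPath G Q) (a b c d e f : V)
    (A1 B1 A2 B2 A3 B3 : V)
    (h1 : [A1, B1] ∈ Q) (h2 : [A2, B2] ∈ Q) (h3 : [A3, B3] ∈ Q)
    (d12 : [A1, B1] ≠ [A2, B2]) (d13 : [A1, B1] ≠ [A3, B3]) (d23 : [A2, B2] ≠ [A3, B3])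
    (hpath : G.IsPathList [a, b, c, d, e, f])
    (e1 : (A1, B1) ∈ listEdges [a, b, c, d, e, f] ∨ (B1, A1) ∈ listEdges [a, b, c, d, e, f])
    (e2 : (A2, B2) ∈ listEdges [a, b, c, d, e, f] ∨ (B2, A2) ∈ listEdges [a, b, c, d, e, f])
    (e3 : (A3, B3) ∈ listEdges [a, b, c, d, e, f] ∨ (B3, A3) ∈ listEdges [a, b, c, d, e, f]) :
    False := by
  refine hno6 ⟨[a, b, c, d, e, f], [A1, B1], [A2, B2], [A3, B3], hpath, rfl,
    h1, h2, h3, rfl, rfl, rfl, d12, d13, d23, ?_⟩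
  intro p hp ed hed
  simp only [List.mem_cons, List.not_mem_nil, or_false] at hp
  rcases hp with rfl | rfl | rfl <;>
    · simp only [listEdges, List.zip, List.zipWith, List.tail_cons, List.zipWith_cons_cons, List.zipWith_nil_right, List.mem_singleton] at hed
      subst hed
      first
        | exact e1.imp id (fun h => h)
        | exact e2.imp id (fun h => h)
        | exact e3.imp id (fun h => h)

lemma extend_one_path {V : Type*} [DecidableEq V] (G : SimpleGraph V) (Q : Finset (List V))
    (hQ : G.IsPathPartition 3 Q) (hleast : G.HasLeastOnePaths Q)
    (a b w : V) (hab : [a, b] ∈ Q) (hw : [w] ∈ Q) (haw : G.Adj a w) (hwb : w ≠ b) : False := by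
  have hadj : G.Adj a b := by
    have := (hQ.1 _ hab).1.2.2; simpa [List.Chain'] using this
  have hne : a ≠ b := by
    have := (hQ.1 _ hab).1.2.1; simpa using this
  have hwa : w ≠ a := haw.ne'
  set Q' : Finset (List V) := insert [w, a, b] ((Q.erase [a, b]).erase [w]) with hQ'def
  have hmemQ' : ∀ l : List V, l ∈ Q' ↔ l = [w, a, b] ∨ (l ∈ Q ∧ l ≠ [a, b] ∧ l ≠ [w]) := by
    intro l
    simp only [hQ'def, Finset.mem_insert, Finset.mem_erase]
    tauto
  have hpart : G.IsPathPartition 3 Q' := by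
    constructor
    · intro l hl
      rcases (hmemQ' l).1 hl with rfl | ⟨hlQ, -, -⟩
      · exact ⟨⟨by simp, by simp [hwa, hwb, hne], by simp [List.Chain', List.isChain_cons_cons, haw.symm, hadj]⟩,
          by simp⟩
      · exact hQ.1 l hlQ
    · intro z
      obtain ⟨l0, ⟨hl0, hz0⟩, hu⟩ := hQ.2 z
      by_cases hc : l0 = [a, b] ∨ l0 = [w]
      · refine ⟨[w, a, b], ⟨(hmemQ' _).2 (Or.inl rfl), ?_⟩, ?_⟩
        · rcases hc with rfl | rfl
          · simp only [List.mem_cons, List.not_mem_nil, or_false] at hz0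
            rcases hz0 with rfl | rfl <;> simp
          · simp only [List.mem_singleton] at hz0; subst hz0; simp
        · rintro l' ⟨hl', hzl'⟩
          rcases (hmemQ' l').1 hl' with rfl | ⟨hlQ', hne1, hne2⟩
          · rfl
          · rcases hc with rfl | rfl
            · exact absurd (hu l' ⟨hlQ', hzl'⟩) hne1
            · exact absurd (hu l' ⟨hlQ', hzl'⟩) hne2
      · push_neg at hc
        refine ⟨l0, ⟨(hmemQ' _).2 (Or.inr ⟨hl0, hc.1, hc.2⟩), hz0⟩, ?_⟩
        rintro l' ⟨hl', hzl'⟩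
        rcases (hmemQ' l').1 hl' with rfl | ⟨hlQ', -, -⟩
        · simp only [List.mem_cons, List.not_mem_nil, or_false] at hzl'
          rcases hzl' with h | h | h
          · exact absurd (hu [w] ⟨hw, by simp [h]⟩).symm hc.2
          · exact absurd (hu [a, b] ⟨hab, by simp [h]⟩).symm hc.1
          · exact absurd (hu [a, b] ⟨hab, by simp [h]⟩).symm hc.1
        · exact hu l' ⟨hlQ', hzl'⟩
  have h1card : [w] ∈ Q.filter (fun l => l.length = 1) := by
    simp [Finset.mem_filter, hw]
  have hfilt : Q'.filter (fun l => l.length = 1) = (Q.filter fun l => l.length = 1).erase [w] := by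
    ext l
    simp only [Finset.mem_filter, Finset.mem_erase, hmemQ' l]
    constructor
    · rintro ⟨rfl | ⟨hlQ, -, hne2⟩, hlen⟩
      · simp at hlen
      · exact ⟨hne2, hlQ, hlen⟩
    · rintro ⟨hne2, hlQ, hlen⟩
      refine ⟨Or.inr ⟨hlQ, fun h => ?_, hne2⟩, hlen⟩
      subst h; simp at hlen
  have hle := hleast Q' hpart
  rw [hfilt, Finset.card_erase_of_mem h1card] at hle
  have hpos : 0 < (Q.filter fun l => l.length = 1).card := Finset.card_pos.2 ⟨[w], h1card⟩
  omega

lemma generic_case {V : Type*} [DecidableEq V] (G : SimpleGraph V) (Q : Finset (List V))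
    (hQ : G.IsPathPartition 3 Q) (hleast : G.HasLeastOnePaths Q) (hno6 : NoSixPath G Q)
    (A B C D w : V)
    (h1 : [A, B] ∈ Q) (h2 : [C, D] ∈ Q) (h12 : [A, B] ≠ [C, D])
    (hBD : G.Adj B D) (hAw : G.Adj A w)
    (hwA : w ≠ A) (hwB : w ≠ B) (hwC : w ≠ C) (hwD : w ≠ D) :
    ∃ p ∈ Q, p.length = 3 ∧ w ∈ p := by
  have hdisj : ∀ {l₁ l₂ : List V}, l₁ ∈ Q → l₂ ∈ Q → l₁ ≠ l₂ → ∀ z, z ∈ l₁ → z ∉ l₂ := by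
    intro l₁ l₂ ha hb hne z hz₁ hz₂
    exact hne ((hQ.2 z).unique ⟨ha, hz₁⟩ ⟨hb, hz₂⟩)
  have hABadj : G.Adj A B := by have := (hQ.1 _ h1).1.2.2; simpa [List.Chain'] using this
  have hCDadj : G.Adj C D := by have := (hQ.1 _ h2).1.2.2; simpa [List.Chain'] using this
  have hAB : A ≠ B := by have := (hQ.1 _ h1).1.2.1; simpa using this
  have hCD : C ≠ D := by have := (hQ.1 _ h2).1.2.1; simpa using this
  have hAC : A ≠ C := fun h => hdisj h1 h2 h12 A (by simp) (by simp [h])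
  have hAD : A ≠ D := fun h => hdisj h1 h2 h12 A (by simp) (by simp [h])
  have hBC : B ≠ C := fun h => hdisj h1 h2 h12 B (by simp) (by simp [h])
  have hBD' : B ≠ D := fun h => hdisj h1 h2 h12 B (by simp) (by simp [h])
  obtain ⟨p, ⟨hpQ, hwp⟩, -⟩ := hQ.2 w
  have hpl := hQ.1 p hpQ
  have hpAB : p ≠ [A, B] := by
    rintro rfl
    simp only [List.mem_cons, List.not_mem_nil, or_false] at hwp
    rcases hwp with rfl | rfl
    exacts [hwA rfl, hwB rfl]
  have hpCD : p ≠ [C, D] := by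
    rintro rfl
    simp only [List.mem_cons, List.not_mem_nil, or_false] at hwp
    rcases hwp with rfl | rfl
    exacts [hwC rfl, hwD rfl]
  rcases p with _ | ⟨x, _ | ⟨y, _ | ⟨z, _ | ⟨t, rest⟩⟩⟩⟩
  · exact absurd rfl hpl.1.1
  · -- p = [x], so x = w and [w] ∈ Q
    simp only [List.mem_singleton] at hwp
    subst hwp
    exact (extend_one_path G Q hQ hleast A B w h1 hpQ hAw hwB).elim
  · -- p = [x, y]
    have hxy : x ≠ y := by have := hpl.1.2.1; simpa using this
    have hxyadj : G.Adj x y := by have := hpl.1.2.2; simpa [List.Chain'] using this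
    have hx1 : x ∉ [A, B] := hdisj hpQ h1 hpAB x (by simp)
    have hy1 : y ∉ [A, B] := hdisj hpQ h1 hpAB y (by simp)
    have hx2 : x ∉ [C, D] := hdisj hpQ h2 hpCD x (by simp)
    have hy2 : y ∉ [C, D] := hdisj hpQ h2 hpCD y (by simp)
    simp only [List.mem_cons, List.not_mem_nil, or_false, not_or] at hx1 hy1 hx2 hy2
    simp only [List.mem_cons, List.not_mem_nil, or_false] at hwp
    rcases hwp with rfl | rfl
    · -- w = x, other vertex y; six path [y, w, A, B, D, C]
      exact (six_contra G Q hno6 y w A B D C w y A B C D hpQ h1 h2 hpAB hpCD h12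
        (isPathList6 G hxyadj.symm hAw.symm hABadj hBD hCDadj.symm
          hxy.symm hy1.1 hy1.2 hy2.2 hy2.1 hwA hwB hwD hwC hAB hAD hAC hBD' hBC hCD.symm)
        (Or.inr (by simp [listEdges])) (Or.inl (by simp [listEdges]))
        (Or.inr (by simp [listEdges]))).elim
    · -- w = y, other vertex x; six path [x, w, A, B, D, C]
      exact (six_contra G Q hno6 x w A B D C x w A B C D hpQ h1 h2 hpAB hpCD h12
        (isPathList6 G hxyadj hAw.symm hABadj hBD hCDadj.symm
          hxy hx1.1 hx1.2 hx2.2 hx2.1 hwA hwB hwD hwC hAB hAD hAC hBD' hBC hCD.symm)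
        (Or.inl (by simp [listEdges])) (Or.inl (by simp [listEdges]))
        (Or.inr (by simp [listEdges]))).elim
  · exact ⟨[x, y, z], hpQ, rfl, hwp⟩
  · have := hpl.2; simp only [List.length_cons] at this; omega

/-- Lemma 3.4, structural part: every neighbour `w ∉ {v, v', v''}`
of any of `u, u', u''` lies on a 3-path of `Q`. -/
theorem neighbours_on_three_paths {V : Type*} [Fintype V] [DecidableEq V]
    (G : SimpleGraph V) (Q : Finset (List V))
    (hQ : G.IsPathPartition 3 Q)
    (hleast : G.HasLeastOnePaths Q)
    (hno6 : NoSixPath G Q)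
    (u v u' v' u'' v'' : V)
    (hP1 : G.IsPathList [v, v', v''])
    (h1 : [u, v] ∈ Q) (h2 : [u', v'] ∈ Q) (h3 : [u'', v''] ∈ Q)
    (h12 : [u, v] ≠ [u', v']) (h13 : [u, v] ≠ [u'', v'']) (h23 : [u', v'] ≠ [u'', v'']) :
    ∀ a b : V, ((a, b) = (u, v) ∨ (a, b) = (u', v') ∨ (a, b) = (u'', v'')) →
      ∀ w : V, G.Adj a w → w ≠ v → w ≠ v' → w ≠ v'' →
        ∃ p ∈ Q, p.length = 3 ∧ w ∈ p := by
  have hdisj : ∀ {l₁ l₂ : List V}, l₁ ∈ Q → l₂ ∈ Q → l₁ ≠ l₂ → ∀ z, z ∈ l₁ → z ∉ l₂ := by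
    intro l₁ l₂ ha hb hne z hz₁ hz₂
    exact hne ((hQ.2 z).unique ⟨ha, hz₁⟩ ⟨hb, hz₂⟩)
  have auv : G.Adj u v := by have := (hQ.1 _ h1).1.2.2; simpa [List.Chain'] using this
  have au'v' : G.Adj u' v' := by have := (hQ.1 _ h2).1.2.2; simpa [List.Chain'] using this
  have au''v'' : G.Adj u'' v'' := by have := (hQ.1 _ h3).1.2.2; simpa [List.Chain'] using this
  have nuv : u ≠ v := by have := (hQ.1 _ h1).1.2.1; simpa using this
  have nu'v' : u' ≠ v' := by have := (hQ.1 _ h2).1.2.1; simpa using this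
  have nu''v'' : u'' ≠ v'' := by have := (hQ.1 _ h3).1.2.1; simpa using this
  have avv' : G.Adj v v' := by have := hP1.2.2; simp [List.Chain', List.isChain_cons_cons] at this; exact this.1
  have av'v'' : G.Adj v' v'' := by have := hP1.2.2; simp [List.Chain', List.isChain_cons_cons] at this; exact this.2
  have nuu' : u ≠ u' := fun h => hdisj h1 h2 h12 u (by simp) (by simp [h])
  have nuv' : u ≠ v' := fun h => hdisj h1 h2 h12 u (by simp) (by simp [h])
  have nvu' : v ≠ u' := fun h => hdisj h1 h2 h12 v (by simp) (by simp [h])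
  have nvv' : v ≠ v' := fun h => hdisj h1 h2 h12 v (by simp) (by simp [h])
  have nuu'' : u ≠ u'' := fun h => hdisj h1 h3 h13 u (by simp) (by simp [h])
  have nuv'' : u ≠ v'' := fun h => hdisj h1 h3 h13 u (by simp) (by simp [h])
  have nvu'' : v ≠ u'' := fun h => hdisj h1 h3 h13 v (by simp) (by simp [h])
  have nvv'' : v ≠ v'' := fun h => hdisj h1 h3 h13 v (by simp) (by simp [h])
  have nu'u'' : u' ≠ u'' := fun h => hdisj h2 h3 h23 u' (by simp) (by simp [h])
  have nu'v'' : u' ≠ v'' := fun h => hdisj h2 h3 h23 u' (by simp) (by simp [h])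
  have nv'u'' : v' ≠ u'' := fun h => hdisj h2 h3 h23 v' (by simp) (by simp [h])
  have nv'u' : v' ≠ u' := nu'v'.symm
  have nv'v'' : v' ≠ v'' := fun h => hdisj h2 h3 h23 v' (by simp) (by simp [h])
  intro a b hab w haw hw1 hw2 hw3
  rcases hab with h | h | h <;> (simp only [Prod.mk.injEq] at h; rw [h.1] at haw; clear h)
  · -- a = u
    by_cases hwu' : w = u'
    · rw [hwu'] at haw
      -- six path [v, u, u', v', v'', u'']
      exact (six_contra G Q hno6 v u u' v' v'' u'' u v u' v' u'' v'' h1 h2 h3 h12 h13 h23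
        (isPathList6 G auv.symm haw au'v' av'v'' au''v''.symm
          nuv.symm nvu' nvv' nvv'' nvu'' nuu' nuv' nuv'' nuu''
          nu'v' nu'v'' nu'u'' nv'v'' nv'u'' nu''v''.symm)
        (Or.inr (by simp [listEdges])) (Or.inl (by simp [listEdges]))
        (Or.inr (by simp [listEdges]))).elim
    · exact generic_case G Q hQ hleast hno6 u v u' v' w h1 h2 h12 avv' haw
        haw.ne' hw1 hwu' hw2
  · -- a = u'
    by_cases hwu'' : w = u''
    · rw [hwu''] at haw
      -- six path [u, v, v', u', u'', v'']
      exact (six_contra G Q hno6 u v v' u' u'' v'' u v u' v' u'' v'' h1 h2 h3 h12 h13 h23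
        (isPathList6 G auv avv' au'v'.symm haw au''v''
          nuv nuv' nuu' nuu'' nuv'' nvv' nvu' nvu'' nvv''
          nv'u' nv'u'' nv'v'' nu'u'' nu'v'' nu''v'')
        (Or.inl (by simp [listEdges])) (Or.inr (by simp [listEdges]))
        (Or.inl (by simp [listEdges]))).elim
    · exact generic_case G Q hQ hleast hno6 u' v' u'' v'' w h2 h3 h23 av'v'' haw
        haw.ne' hw2 hwu'' hw3
  · -- a = u''
    by_cases hwu' : w = u'
    · rw [hwu'] at haw
      -- six path [u, v, v', u', u'', v''] again, via edge u'-u''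
      exact (six_contra G Q hno6 u v v' u' u'' v'' u v u' v' u'' v'' h1 h2 h3 h12 h13 h23
        (isPathList6 G auv avv' au'v'.symm haw.symm au''v''
          nuv nuv' nuu' nuu'' nuv'' nvv' nvu' nvu'' nvv''
          nv'u' nv'u'' nv'v'' nu'u'' nu'v'' nu''v'')
        (Or.inl (by simp [listEdges])) (Or.inr (by simp [listEdges]))
        (Or.inl (by simp [listEdges]))).elim
    · exact generic_case G Q hQ hleast hno6 u'' v'' u' v' w h3 h2 h23.symm av'v''.symm haw
        haw.ne' hw3 hwu' hw2
end

section
/- Let G be a finite simple graph and let Q be a 3-path partition of G that has the least 1-paths and is locally optimal. Suppose u-v and u'-v' are two distinct 2-paths of Q with (v, v') an edge of G; P is a 3-path of Q; w is a vertex of P with (u, w) an edge of G; y1 is an endpoint of P with y1 ≠ w; and y2 is a vertex of G with (y1, y2) an edge of G such that y2 is not a vertex of P and y2 ∉ {u, v, u', v'}. Then y2 lies on a 3-path of Q. -/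
open SimpleGraph in
lemma swap_partition {V : Type*} [DecidableEq V] (G : SimpleGraph V) (k : ℕ)
    (Q Sold Snew : Finset (List V))
    (hQ : G.IsPathPartition k Q) (hsub : Sold ⊆ Q)
    (hnew : ∀ l ∈ Snew, G.IsPathList l ∧ l.length ≤ k)
    (hdisjnew : ∀ l ∈ Snew, ∀ l' ∈ Snew, l ≠ l' → ∀ x, x ∈ l → x ∉ l')
    (hcov : Snew.biUnion List.toFinset = Sold.biUnion List.toFinset) :
    G.IsPathPartition k ((Q \ Sold) ∪ Snew) := by
  obtain ⟨hQ1, hQ2⟩ := hQ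
  have hdisjQ : ∀ l ∈ Q, ∀ l' ∈ Q, l ≠ l' → ∀ x, x ∈ l → x ∉ l' := by
    intro l hl l' hl' hne x hx hx'
    obtain ⟨m, hm, hu⟩ := hQ2 x
    exact hne ((hu l ⟨hl, hx⟩).trans (hu l' ⟨hl', hx'⟩).symm)
  constructor
  · intro l hl
    rcases Finset.mem_union.1 hl with h | h
    · exact hQ1 l (Finset.mem_sdiff.1 h).1
    · exact hnew l h
  · intro x
    by_cases hx : x ∈ Sold.biUnion List.toFinset
    · have hx' : x ∈ Snew.biUnion List.toFinset := hcov ▸ hx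
      obtain ⟨l, hl, hxl⟩ := Finset.mem_biUnion.1 hx'
      refine ⟨l, ⟨Finset.mem_union_right _ hl, List.mem_toFinset.1 hxl⟩, ?_⟩
      rintro l' ⟨hl', hxl'⟩
      rcases Finset.mem_union.1 hl' with h | h
      · exfalso
        obtain ⟨hl'Q, hl'S⟩ := Finset.mem_sdiff.1 h
        obtain ⟨m, hm, hxm⟩ := Finset.mem_biUnion.1 hx
        exact hdisjQ l' hl'Q m (hsub hm) (fun e => hl'S (e ▸ hm)) x hxl'
          (List.mem_toFinset.1 hxm)
      · by_contra hne
        exact hdisjnew l' h l hl hne x hxl' (List.mem_toFinset.1 hxl)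
    · obtain ⟨l, ⟨hlQ, hxl⟩, hu⟩ := hQ2 x
      have hlS : l ∉ Sold := fun h =>
        hx (Finset.mem_biUnion.2 ⟨l, h, List.mem_toFinset.2 hxl⟩)
      refine ⟨l, ⟨Finset.mem_union_left _ (Finset.mem_sdiff.2 ⟨hlQ, hlS⟩), hxl⟩, ?_⟩
      rintro l' ⟨hl', hxl'⟩
      rcases Finset.mem_union.1 hl' with h | h
      · exact hu l' ⟨(Finset.mem_sdiff.1 h).1, hxl'⟩
      · exact absurd (hcov ▸ Finset.mem_biUnion.2 ⟨l', h, List.mem_toFinset.2 hxl'⟩) hx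

set_option maxHeartbeats 1000000 in
/-- Claim 3.5: the vertex `y2` lies on a 3-path of `Q`. -/
theorem claim_y2_on_three_path {V : Type*} [Fintype V] [DecidableEq V]
    (G : SimpleGraph V) (Q : Finset (List V))
    (hQ : G.IsPathPartition 3 Q)
    (hleast : G.HasLeastOnePaths Q)
    (hopt : G.LocallyOptimal Q)
    (u v u' v' p1 p2 p3 w y1 y2 : V)
    (h1 : [u, v] ∈ Q) (h2 : [u', v'] ∈ Q) (h12 : [u, v] ≠ [u', v'])
    (hvv' : G.Adj v v')
    (hP : [p1, p2, p3] ∈ Q)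
    (hw : w ∈ [p1, p2, p3]) (huw : G.Adj u w)
    (hy1 : y1 = p1 ∨ y1 = p3) (hy1w : y1 ≠ w)
    (hy1y2 : G.Adj y1 y2)
    (hy2P : y2 ∉ [p1, p2, p3]) (hy2 : y2 ∉ [u, v, u', v']) :
    ∃ p ∈ Q, p.length = 3 ∧ y2 ∈ p := by
  classical
  have hdisjQ : ∀ l ∈ Q, ∀ l' ∈ Q, l ≠ l' → ∀ x, x ∈ l → x ∉ l' := by
    intro l hl l' hl' hne x hx hx'
    obtain ⟨m, hm, hu⟩ := hQ.2 x
    exact hne ((hu l ⟨hl, hx⟩).trans (hu l' ⟨hl', hx'⟩).symm)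
  have h1p := (hQ.1 _ h1).1
  have h2p := (hQ.1 _ h2).1
  have hPp := (hQ.1 _ hP).1
  have huv : u ≠ v := by have := h1p.2.1; simp at this; tauto
  have hu'v' : u' ≠ v' := by have := h2p.2.1; simp at this; tauto
  have hadjuv' : G.Adj u' v' := by have := h2p.2.2; simpa [List.Chain'] using this
  have hadj12 : G.Adj p1 p2 := by
    have := hPp.2.2; simp [List.Chain', List.isChain_cons_cons] at this; tauto
  have hadj23 : G.Adj p2 p3 := by
    have := hPp.2.2; simp [List.Chain', List.isChain_cons_cons] at this; tauto
  have hPnd : p1 ≠ p2 ∧ p1 ≠ p3 ∧ p2 ≠ p3 := by have := hPp.2.1; simp at this; tauto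
  have hne1P : ([u, v] : List V) ≠ [p1, p2, p3] := fun h => by
    simpa using congrArg List.length h
  have hne2P : ([u', v'] : List V) ≠ [p1, p2, p3] := fun h => by
    simpa using congrArg List.length h
  have hmem12 : ∀ x, x ∈ ([u, v] : List V) → x ∉ ([u', v'] : List V) :=
    hdisjQ _ h1 _ h2 h12
  have hmemP1 : ∀ x, x ∈ ([p1, p2, p3] : List V) → x ∉ ([u, v] : List V) :=
    hdisjQ _ hP _ h1 hne1P.symm
  have hmemP2 : ∀ x, x ∈ ([p1, p2, p3] : List V) → x ∉ ([u', v'] : List V) :=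
    hdisjQ _ hP _ h2 hne2P.symm
  -- extract a, b, c
  obtain ⟨a, b, c, hua, hab, hcy2, hmemiff, habne, hacne, hbcne⟩ :
      ∃ a b c, G.Adj u a ∧ G.Adj a b ∧ G.Adj c y2 ∧
        (∀ x, x ∈ ([p1, p2, p3] : List V) ↔ x ∈ ([a, b, c] : List V)) ∧
        a ≠ b ∧ a ≠ c ∧ b ≠ c := by
    have hwcases : w = p1 ∨ w = p2 ∨ w = p3 := by simpa using hw
    rcases hy1 with h | h
    · rcases hwcases with h' | h' | h'
      · exact absurd (h.trans h'.symm) hy1w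
      · refine ⟨p2, p3, p1, by rw [← h']; exact huw, hadj23, by rw [← h]; exact hy1y2,
          by intro x; simp; tauto,
          hPnd.2.2, fun hh => hPnd.1 hh.symm, fun hh => hPnd.2.1 hh.symm⟩
      · refine ⟨p3, p2, p1, by rw [← h']; exact huw, hadj23.symm, by rw [← h]; exact hy1y2,
          by intro x; simp; tauto,
          fun hh => hPnd.2.2 hh.symm, fun hh => hPnd.2.1 hh.symm, fun hh => hPnd.1 hh.symm⟩
    · rcases hwcases with h' | h' | h'
      · refine ⟨p1, p2, p3, by rw [← h']; exact huw, hadj12, by rw [← h]; exact hy1y2,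
          fun x => Iff.rfl, hPnd.1, hPnd.2.1, hPnd.2.2⟩
      · refine ⟨p2, p1, p3, by rw [← h']; exact huw, hadj12.symm, by rw [← h]; exact hy1y2,
          by intro x; simp; tauto, fun hh => hPnd.1 hh.symm, hPnd.2.2, hPnd.2.1⟩
      · exact absurd (h.trans h'.symm) hy1w
  have haP : a ∈ ([p1, p2, p3] : List V) := (hmemiff a).2 (by simp)
  have hbP : b ∈ ([p1, p2, p3] : List V) := (hmemiff b).2 (by simp)
  have hcP : c ∈ ([p1, p2, p3] : List V) := (hmemiff c).2 (by simp)
  -- basic distinctness facts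
  have hy2' : y2 ≠ u ∧ y2 ≠ v ∧ y2 ≠ u' ∧ y2 ≠ v' := by simp at hy2; tauto
  have hy2abc : y2 ≠ a ∧ y2 ≠ b ∧ y2 ≠ c :=
    ⟨fun h => hy2P (h ▸ haP), fun h => hy2P (h ▸ hbP), fun h => hy2P (h ▸ hcP)⟩
  have hua' : u ≠ u' := by have := hmem12 u (by simp); simp at this; tauto
  have huv'2 : u ≠ v' := by have := hmem12 u (by simp); simp at this; tauto
  have hvu' : v ≠ u' := by have := hmem12 v (by simp); simp at this; tauto
  have hvv'2 : v ≠ v' := hvv'.ne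
  have hXuv : ∀ x, x ∈ ([a, b, c] : List V) → x ≠ u ∧ x ≠ v := by
    intro x hx
    have := hmemP1 x ((hmemiff x).2 hx); simp at this; tauto
  have hXu'v' : ∀ x, x ∈ ([a, b, c] : List V) → x ≠ u' ∧ x ≠ v' := by
    intro x hx
    have := hmemP2 x ((hmemiff x).2 hx); simp at this; tauto
  have hau : a ≠ u := (hXuv a (by simp)).1
  have hbu : b ≠ u := (hXuv b (by simp)).1
  have hcu : c ≠ u := (hXuv c (by simp)).1
  have hav : a ≠ v := (hXuv a (by simp)).2
  have hbv : b ≠ v := (hXuv b (by simp)).2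
  have hcv : c ≠ v := (hXuv c (by simp)).2
  have hau' : a ≠ u' := (hXu'v' a (by simp)).1
  have hbu' : b ≠ u' := (hXu'v' b (by simp)).1
  have hcu' : c ≠ u' := (hXu'v' c (by simp)).1
  have hav' : a ≠ v' := (hXu'v' a (by simp)).2
  have hbv' : b ≠ v' := (hXu'v' b (by simp)).2
  have hcv' : c ≠ v' := (hXu'v' c (by simp)).2
  -- the path containing y2
  obtain ⟨L, ⟨hLQ, hy2L⟩, hLu⟩ := hQ.2 y2
  have hLpath := hQ.1 L hLQ
  have hLne1 : L ≠ [u, v] := by rintro rfl; simp at hy2L; tauto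
  have hLne2 : L ≠ [u', v'] := by rintro rfl; simp at hy2L; tauto
  have hLneP : L ≠ [p1, p2, p3] := by rintro rfl; exact hy2P hy2L
  have hLlen : L.length = 1 ∨ L.length = 2 ∨ L.length = 3 := by
    have h0 : L.length ≠ 0 := fun h => hLpath.1.1 (List.length_eq_zero_iff.1 h)
    have h3 := hLpath.2
    omega
  rcases hLlen with hL1 | hL2 | hL3
  · -- L is a 1-path: contradiction with hleast
    exfalso
    obtain ⟨x0, rfl⟩ := List.length_eq_one_iff.1 hL1
    have hx0 : y2 = x0 := by simpa using hy2L
    have hy2Q : [y2] ∈ Q := by rw [hx0]; exact hLQ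
    set Sold : Finset (List V) := {[u, v], [u', v'], [p1, p2, p3], [y2]} with hSold
    set Snew : Finset (List V) := {[v, v', u'], [u, a, b], [y2, c]} with hSnew
    have hsub : Sold ⊆ Q := by
      simp only [hSold, Finset.insert_subset_iff, Finset.singleton_subset_iff]
      exact ⟨h1, h2, hP, hy2Q⟩
    have hnew : ∀ l ∈ Snew, G.IsPathList l ∧ l.length ≤ 3 := by
      intro l hl
      simp only [hSnew, Finset.mem_insert, Finset.mem_singleton] at hl
      rcases hl with rfl | rfl | rfl
      · exact ⟨⟨by simp, by simp [hvv'2, hvu', hu'v'.symm],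
          by simp [List.Chain', List.isChain_cons_cons, hvv', hadjuv'.symm]⟩, by simp⟩
      · exact ⟨⟨by simp, by simp [Ne.symm hau, Ne.symm hbu, habne],
          by simp [List.Chain', List.isChain_cons_cons, hua, hab]⟩, by simp⟩
      · exact ⟨⟨by simp, by simp [hy2abc.2.2], by simp [List.Chain', hcy2.symm]⟩, by simp⟩
    have hABd : ∀ x, x ∈ ([v, v', u'] : List V) → x ∉ ([u, a, b] : List V) := by
      intro x hx; simp at hx ⊢
      rcases hx with rfl | rfl | rfl
      · exact ⟨Ne.symm huv, Ne.symm hav, Ne.symm hbv⟩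
      · exact ⟨Ne.symm huv'2, Ne.symm hav', Ne.symm hbv'⟩
      · exact ⟨Ne.symm hua', Ne.symm hau', Ne.symm hbu'⟩
    have hACd : ∀ x, x ∈ ([v, v', u'] : List V) → x ∉ ([y2, c] : List V) := by
      intro x hx; simp at hx ⊢
      rcases hx with rfl | rfl | rfl
      · exact ⟨Ne.symm hy2'.2.1, Ne.symm hcv⟩
      · exact ⟨Ne.symm hy2'.2.2.2, Ne.symm hcv'⟩
      · exact ⟨Ne.symm hy2'.2.2.1, Ne.symm hcu'⟩
    have hBCd : ∀ x, x ∈ ([u, a, b] : List V) → x ∉ ([y2, c] : List V) := by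
      intro x hx; simp at hx ⊢
      rcases hx with rfl | rfl | rfl
      · exact ⟨Ne.symm hy2'.1, Ne.symm hcu⟩
      · exact ⟨Ne.symm hy2abc.1, hacne⟩
      · exact ⟨Ne.symm hy2abc.2.1, hbcne⟩
    have hdisjnew : ∀ l ∈ Snew, ∀ l' ∈ Snew, l ≠ l' → ∀ x, x ∈ l → x ∉ l' := by
      intro l hl l' hl' hne x hx
      simp only [hSnew, Finset.mem_insert, Finset.mem_singleton] at hl hl'
      rcases hl with rfl | rfl | rfl <;> rcases hl' with rfl | rfl | rfl <;>
        first
          | exact absurd rfl hne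
          | exact hABd x hx
          | exact hACd x hx
          | exact hBCd x hx
          | exact fun hx' => hABd x hx' hx
          | exact fun hx' => hACd x hx' hx
          | exact fun hx' => hBCd x hx' hx
    have hcov : Snew.biUnion List.toFinset = Sold.biUnion List.toFinset := by
      ext x
      have h' := hmemiff x
      simp only [List.mem_cons, List.not_mem_nil, or_false] at h'
      simp only [hSnew, hSold, Finset.biUnion_insert, Finset.singleton_biUnion,
        Finset.mem_union, List.mem_toFinset, List.mem_cons, List.not_mem_nil, or_false]
      clear * - h'
      rw [h']
      clear h'
      tauto
    have hQ' := swap_partition G 3 Q Sold Snew hQ hsub hnew hdisjnew hcov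
    have hle := hleast _ hQ'
    have hy2mem : [y2] ∈ Q.filter (fun l => l.length = 1) :=
      Finset.mem_filter.2 ⟨hy2Q, rfl⟩
    have hsubf : ((Q \ Sold) ∪ Snew).filter (fun l => l.length = 1) ⊆
        (Q.filter (fun l => l.length = 1)).erase [y2] := by
      intro l hl
      obtain ⟨hl1, hl2⟩ := Finset.mem_filter.1 hl
      rcases Finset.mem_union.1 hl1 with h | h
      · obtain ⟨hlQ, hlS⟩ := Finset.mem_sdiff.1 h
        refine Finset.mem_erase.2 ⟨?_, Finset.mem_filter.2 ⟨hlQ, hl2⟩⟩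
        rintro rfl
        exact hlS (by simp [hSold])
      · exfalso
        simp only [hSnew, Finset.mem_insert, Finset.mem_singleton] at h
        rcases h with rfl | rfl | rfl <;> simp at hl2
    have hcard := Finset.card_le_card hsubf
    rw [Finset.card_erase_of_mem hy2mem] at hcard
    have hpos : 0 < (Q.filter (fun l => l.length = 1)).card :=
      Finset.card_pos.2 ⟨_, hy2mem⟩
    omega
  · -- L is a 2-path: contradiction with local optimality
    exfalso
    obtain ⟨x0, x1, rfl⟩ := List.length_eq_two.1 hL2
    have hchain : G.Adj x0 x1 := by have := hLpath.1.2.2; simpa [List.Chain'] using this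
    have hx01 : x0 ≠ x1 := hchain.ne
    obtain ⟨z, hzy2, hzne, hLiff⟩ :
        ∃ z, G.Adj y2 z ∧ z ≠ y2 ∧
          ∀ x, x ∈ ([x0, x1] : List V) ↔ (x = y2 ∨ x = z) := by
      rcases (by simpa using hy2L : y2 = x0 ∨ y2 = x1) with h | h
      · exact ⟨x1, h ▸ hchain, by rw [h]; exact Ne.symm hx01,
          by intro x; rw [← h]; simp⟩
      · exact ⟨x0, h ▸ hchain.symm, by rw [h]; exact hx01,
          by intro x; rw [← h]; simp; tauto⟩
    have hzL : z ∈ ([x0, x1] : List V) := (hLiff z).2 (Or.inr rfl)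
    have hz1 : z ∉ ([u, v] : List V) := hdisjQ _ hLQ _ h1 hLne1 z hzL
    have hz2 : z ∉ ([u', v'] : List V) := hdisjQ _ hLQ _ h2 hLne2 z hzL
    have hzP : z ∉ ([p1, p2, p3] : List V) := hdisjQ _ hLQ _ hP hLneP z hzL
    have hzuv : z ≠ u ∧ z ≠ v := by simp at hz1; tauto
    have hzu'v' : z ≠ u' ∧ z ≠ v' := by simp at hz2; tauto
    have hzabc : z ≠ a ∧ z ≠ b ∧ z ≠ c :=
      ⟨fun h => hzP (h ▸ haP), fun h => hzP (h ▸ hbP), fun h => hzP (h ▸ hcP)⟩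
    apply hopt
    refine ⟨{[u, v], [u', v'], [p1, p2, p3], [x0, x1]},
      {[v, v', u'], [u, a, b], [z, y2, c]}, ?_, ?_, ?_, ?_, ?_, ?_, ?_⟩
    · simp only [Finset.insert_subset_iff, Finset.singleton_subset_iff]
      exact ⟨h1, h2, hP, hLQ⟩
    · calc ({[u, v], [u', v'], [p1, p2, p3], [x0, x1]} : Finset (List V)).card
          ≤ 3 + 1 := by
            refine le_trans (Finset.card_insert_le _ _) ?_
            refine Nat.add_le_add_right ?_ 1
            refine le_trans (Finset.card_insert_le _ _) ?_
            refine le_trans (Nat.add_le_add_right (Finset.card_insert_le _ _) 1) ?_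
            simp
        _ ≤ 6 := by norm_num
    · intro l hl
      simp only [Finset.mem_insert, Finset.mem_singleton] at hl
      rcases hl with rfl | rfl | rfl | rfl <;> simp
    · have hScard : ({[u, v], [u', v'], [p1, p2, p3], [x0, x1]} : Finset (List V)).card
          = 4 := by
        rw [Finset.card_insert_of_notMem, Finset.card_insert_of_notMem,
          Finset.card_insert_of_notMem, Finset.card_singleton]
        · simp only [Finset.mem_singleton]
          exact hLneP.symm
        · simp only [Finset.mem_insert, Finset.mem_singleton]
          rintro (h | h)
          exacts [hne2P h, hLne2 h.symm]
        · simp only [Finset.mem_insert, Finset.mem_singleton]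
          rintro (h | h | h)
          exacts [h12 h, hne1P h, hLne1 h.symm]
      rw [hScard]
      have hc : ({[v, v', u'], [u, a, b], [z, y2, c]} : Finset (List V)).card ≤ 3 := by
        refine le_trans (Finset.card_insert_le _ _) ?_
        refine Nat.add_le_add_right ?_ 1
        refine le_trans (Finset.card_insert_le _ _) ?_
        simp
      omega
    · intro l hl
      simp only [Finset.mem_insert, Finset.mem_singleton] at hl
      rcases hl with rfl | rfl | rfl
      · exact ⟨⟨by simp, by simp [hvv'2, hvu', hu'v'.symm],
          by simp [List.Chain', List.isChain_cons_cons, hvv', hadjuv'.symm]⟩, by simp⟩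
      · exact ⟨⟨by simp, by simp [Ne.symm hau, Ne.symm hbu, habne],
          by simp [List.Chain', List.isChain_cons_cons, hua, hab]⟩, by simp⟩
      · exact ⟨⟨by simp, by simp [hzne, hzabc.2.2, hy2abc.2.2],
          by simp [List.Chain', List.isChain_cons_cons, hzy2.symm, hcy2.symm]⟩, by simp⟩
    · have hABd : ∀ x, x ∈ ([v, v', u'] : List V) → x ∉ ([u, a, b] : List V) := by
        intro x hx; simp at hx ⊢
        rcases hx with rfl | rfl | rfl
        · exact ⟨Ne.symm huv, Ne.symm hav, Ne.symm hbv⟩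
        · exact ⟨Ne.symm huv'2, Ne.symm hav', Ne.symm hbv'⟩
        · exact ⟨Ne.symm hua', Ne.symm hau', Ne.symm hbu'⟩
      have hACd : ∀ x, x ∈ ([v, v', u'] : List V) → x ∉ ([z, y2, c] : List V) := by
        intro x hx; simp at hx ⊢
        rcases hx with rfl | rfl | rfl
        · exact ⟨Ne.symm hzuv.2, Ne.symm hy2'.2.1, Ne.symm hcv⟩
        · exact ⟨Ne.symm hzu'v'.2, Ne.symm hy2'.2.2.2, Ne.symm hcv'⟩
        · exact ⟨Ne.symm hzu'v'.1, Ne.symm hy2'.2.2.1, Ne.symm hcu'⟩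
      have hBCd : ∀ x, x ∈ ([u, a, b] : List V) → x ∉ ([z, y2, c] : List V) := by
        intro x hx; simp at hx ⊢
        rcases hx with rfl | rfl | rfl
        · exact ⟨Ne.symm hzuv.1, Ne.symm hy2'.1, Ne.symm hcu⟩
        · exact ⟨Ne.symm hzabc.1, Ne.symm hy2abc.1, hacne⟩
        · exact ⟨Ne.symm hzabc.2.1, Ne.symm hy2abc.2.1, hbcne⟩
      intro l hl l' hl' hne x hx
      simp only [Finset.mem_insert, Finset.mem_singleton] at hl hl'
      rcases hl with rfl | rfl | rfl <;> rcases hl' with rfl | rfl | rfl <;>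
        first
          | exact absurd rfl hne
          | exact hABd x hx
          | exact hACd x hx
          | exact hBCd x hx
          | exact fun hx' => hABd x hx' hx
          | exact fun hx' => hACd x hx' hx
          | exact fun hx' => hBCd x hx' hx
    · ext x
      have h' := hmemiff x
      have h'' := hLiff x
      simp only [List.mem_cons, List.not_mem_nil, or_false] at h' h''
      simp only [Finset.biUnion_insert, Finset.singleton_biUnion,
        Finset.mem_union, List.mem_toFinset, List.mem_cons, List.not_mem_nil, or_false]
      clear * - h' h''
      rw [h', h'']
      clear h' h''
      tauto
  · exact ⟨L, hLQ, hL3, hy2L⟩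
end

section
/- Let G be a finite simple graph and let Q be a 3-path partition of G that has the least 1-paths. Then no vertex forming a 1-path of Q is adjacent in G to an endpoint of a 2-path of Q. -/
/-- in a 3-path partition with the least 1-paths, no singleton is
adjacent to an endpoint of a 2-path. -/
theorem singleton_not_adjacent_two_path {V : Type*} [Fintype V] [DecidableEq V]
    (G : SimpleGraph V) (Q : Finset (List V))
    (hQ : G.IsPathPartition 3 Q)
    (hleast : G.HasLeastOnePaths Q) :
    ∀ x : V, [x] ∈ Q → ∀ a b : V, [a, b] ∈ Q → ¬ G.Adj x a ∧ ¬ G.Adj x b := by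
  intro x hx a b hab
  -- basic facts
  have hxab : ([x] : List V) ≠ [a, b] := by simp
  have hxnot : x ∉ ([a, b] : List V) := by
    intro h
    exact hxab ((hQ.2 x).unique ⟨hx, by simp⟩ ⟨hab, h⟩)
  have hxa : x ≠ a := by intro h; exact hxnot (by simp [h])
  have hxb : x ≠ b := by intro h; exact hxnot (by simp [h])
  have habP := hQ.1 _ hab
  have hanb : a ≠ b := by
    have := habP.1.2.1
    simpa using this
  have hAdjab : G.Adj a b := by
    have := habP.1.2.2
    simpa [List.Chain'] using this
  -- the key replacement argument
  have key : ∀ p : List V, G.IsPathList p → p.length ≤ 3 → p.length ≠ 1 →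
      (∀ v, v ∈ p ↔ (v = x ∨ v = a ∨ v = b)) → False := by
    intro p hpPath hplen hp1 hmem
    set E := (Q.erase [x]).erase [a, b] with hE
    set Q' := insert p E with hQ'def
    have hEQ : ∀ l ∈ E, l ∈ Q := fun l hl =>
      Finset.mem_of_mem_erase (Finset.mem_of_mem_erase hl)
    have hQ' : G.IsPathPartition 3 Q' := by
      constructor
      · intro l hl
        rcases Finset.mem_insert.mp hl with rfl | hl
        · exact ⟨hpPath, hplen⟩
        · exact hQ.1 l (hEQ l hl)
      · intro v
        by_cases hv : v ∈ p
        · refine ⟨p, ⟨Finset.mem_insert_self _ _, hv⟩, ?_⟩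
          rintro l ⟨hl, hvl⟩
          rcases Finset.mem_insert.mp hl with rfl | hl'
          · rfl
          · exfalso
            have hlab : l ≠ [a, b] := (Finset.mem_erase.mp hl').1
            have hlx : l ≠ [x] := (Finset.mem_erase.mp (Finset.mem_erase.mp hl').2).1
            have hlQ : l ∈ Q := hEQ l hl'
            rcases (hmem v).1 hv with rfl | rfl | rfl
            · exact hlx ((hQ.2 v).unique ⟨hlQ, hvl⟩ ⟨hx, by simp⟩)
            · exact hlab ((hQ.2 v).unique ⟨hlQ, hvl⟩ ⟨hab, by simp⟩)
            · exact hlab ((hQ.2 v).unique ⟨hlQ, hvl⟩ ⟨hab, by simp⟩)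
        · obtain ⟨l, ⟨hlQ, hvl⟩, huniq⟩ := hQ.2 v
          have hlx : l ≠ [x] := by
            rintro rfl
            exact hv ((hmem v).2 (Or.inl (by simpa using hvl)))
          have hlab : l ≠ [a, b] := by
            rintro rfl
            refine hv ((hmem v).2 ?_)
            rcases (by simpa using hvl : v = a ∨ v = b) with h | h
            · exact Or.inr (Or.inl h)
            · exact Or.inr (Or.inr h)
          refine ⟨l, ⟨Finset.mem_insert_of_mem
            (Finset.mem_erase.2 ⟨hlab, Finset.mem_erase.2 ⟨hlx, hlQ⟩⟩), hvl⟩, ?_⟩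
          rintro l' ⟨hl', hvl'⟩
          rcases Finset.mem_insert.mp hl' with rfl | hl''
          · exact absurd hvl' hv
          · exact huniq l' ⟨hEQ l' hl'', hvl'⟩
    have hle := hleast Q' hQ'
    have hfQ' : Q'.filter (fun l => l.length = 1)
        = ((Q.filter (fun l => l.length = 1)).erase [x]).erase [a, b] := by
      rw [hQ'def, Finset.filter_insert, if_neg hp1, hE,
        Finset.filter_erase, Finset.filter_erase]
    have hxf : [x] ∈ Q.filter (fun l => l.length = 1) := by
      simp [Finset.mem_filter, hx]
    have h1 : (Q'.filter (fun l => l.length = 1)).card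
        ≤ ((Q.filter (fun l => l.length = 1)).erase [x]).card := by
      rw [hfQ']
      exact Finset.card_erase_le
    have h2 : ((Q.filter (fun l => l.length = 1)).erase [x]).card
        = (Q.filter (fun l => l.length = 1)).card - 1 :=
      Finset.card_erase_of_mem hxf
    have h3 : 1 ≤ (Q.filter (fun l => l.length = 1)).card :=
      Finset.card_pos.mpr ⟨[x], hxf⟩
    omega
  constructor
  · intro hadj
    refine key [x, a, b] ⟨by simp, by simp [hxa, hxb, hanb], by simp [List.Chain', hadj, hAdjab]⟩
      (by simp) (by simp) ?_
    intro v; simp; try tauto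
  · intro hadj
    refine key [a, b, x] ⟨by simp, by simp [hxa.symm, hxb.symm, hanb], by
      simp [List.Chain', hAdjab, hadj.symm]⟩ (by simp) (by simp) ?_
    intro v; simp; try tauto
end

section
/- Let G be a finite simple graph and let Q be a 3-path partition of G that has the least 1-paths. Then no vertex forming a 1-path of Q is adjacent in G to an endpoint of a 3-path of Q. -/
private lemma key_swap {V : Type*} [DecidableEq V] (G : SimpleGraph V) (Q : Finset (List V))
    (hQ : G.IsPathPartition 3 Q)
    (hleast : G.HasLeastOnePaths Q)
    (x e f g : V) (p : List V)
    (hx : [x] ∈ Q) (hp : p ∈ Q)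
    (hmem : ∀ v, v ∈ p ↔ v = e ∨ v = f ∨ v = g)
    (hef : e ≠ f) (heg : e ≠ g) (hfg : f ≠ g)
    (hxe : G.Adj x e) (hAfg : G.Adj f g) : False := by
  obtain ⟨hpaths, huniq⟩ := hQ
  have hep : e ∈ p := (hmem e).mpr (Or.inl rfl)
  have hfp : f ∈ p := (hmem f).mpr (Or.inr (Or.inl rfl))
  have hgp : g ∈ p := (hmem g).mpr (Or.inr (Or.inr rfl))
  have hxp : x ∉ p := by
    intro hxl
    have := (huniq x).unique ⟨hp, hxl⟩ ⟨hx, List.mem_singleton_self x⟩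
    subst this
    have he : e = x := List.mem_singleton.mp hep
    have hf : f = x := List.mem_singleton.mp hfp
    exact hef (he.trans hf.symm)
  have hxne : x ≠ e := hxe.ne
  have hxnf : x ≠ f := fun h => hxp (h ▸ hfp)
  have hxng : x ≠ g := fun h => hxp (h ▸ hgp)
  -- properties of remaining lists
  have hrem : ∀ l ∈ (Q.erase [x]).erase p, l ∈ Q ∧ x ∉ l ∧ e ∉ l ∧ f ∉ l ∧ g ∉ l := by
    intro l hl
    have hlp : l ≠ p := Finset.ne_of_mem_erase hl
    have hlx : l ≠ [x] := Finset.ne_of_mem_erase (Finset.mem_of_mem_erase hl)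
    have hlQ : l ∈ Q := Finset.mem_of_mem_erase (Finset.mem_of_mem_erase hl)
    refine ⟨hlQ, ?_, ?_, ?_, ?_⟩
    · exact fun h => hlx ((huniq x).unique ⟨hlQ, h⟩ ⟨hx, List.mem_singleton_self x⟩)
    · exact fun h => hlp ((huniq e).unique ⟨hlQ, h⟩ ⟨hp, hep⟩)
    · exact fun h => hlp ((huniq f).unique ⟨hlQ, h⟩ ⟨hp, hfp⟩)
    · exact fun h => hlp ((huniq g).unique ⟨hlQ, h⟩ ⟨hp, hgp⟩)
  set Q' : Finset (List V) := insert [x, e] (insert [f, g] ((Q.erase [x]).erase p)) with hQ'def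
  have hmemQ' : ∀ l, l ∈ Q' ↔ l = [x, e] ∨ l = [f, g] ∨ l ∈ (Q.erase [x]).erase p := by
    intro l; simp [hQ'def]
  have hpart : G.IsPathPartition 3 Q' := by
    constructor
    · intro l hl
      rcases (hmemQ' l).mp hl with rfl | rfl | hl'
      · exact ⟨⟨by simp, by simp [hxne], by simp [List.Chain', hxe]⟩, by simp⟩
      · exact ⟨⟨by simp, by simp [hfg], by simp [List.Chain', hAfg]⟩, by simp⟩
      · exact hpaths l (hrem l hl').1
    · intro v
      by_cases hvx : v = x
      · refine ⟨[x, e], ⟨(hmemQ' _).mpr (Or.inl rfl), by simp [hvx]⟩, ?_⟩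
        subst hvx
        rintro l ⟨hl, hvl⟩
        rcases (hmemQ' l).mp hl with rfl | rfl | hl'
        · rfl
        · simp at hvl; rcases hvl with rfl | rfl; exact absurd rfl hxnf; exact absurd rfl hxng
        · exact absurd hvl (hrem l hl').2.1
      · by_cases hve : v = e
        · refine ⟨[x, e], ⟨(hmemQ' _).mpr (Or.inl rfl), by simp [hve]⟩, ?_⟩
          subst hve
          rintro l ⟨hl, hvl⟩
          rcases (hmemQ' l).mp hl with rfl | rfl | hl'
          · rfl
          · simp at hvl; rcases hvl with rfl | rfl; exact absurd rfl hef; exact absurd rfl heg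
          · exact absurd hvl (hrem l hl').2.2.1
        · by_cases hvf : v = f
          · refine ⟨[f, g], ⟨(hmemQ' _).mpr (Or.inr (Or.inl rfl)), by simp [hvf]⟩, ?_⟩
            subst hvf
            rintro l ⟨hl, hvl⟩
            rcases (hmemQ' l).mp hl with rfl | rfl | hl'
            · simp at hvl; rcases hvl with rfl | rfl; exact absurd rfl (Ne.symm hxnf); exact absurd rfl (Ne.symm hef)
            · rfl
            · exact absurd hvl (hrem l hl').2.2.2.1
          · by_cases hvg : v = g
            · refine ⟨[f, g], ⟨(hmemQ' _).mpr (Or.inr (Or.inl rfl)), by simp [hvg]⟩, ?_⟩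
              subst hvg
              rintro l ⟨hl, hvl⟩
              rcases (hmemQ' l).mp hl with rfl | rfl | hl'
              · simp at hvl; rcases hvl with rfl | rfl; exact absurd rfl (Ne.symm hxng); exact absurd rfl (Ne.symm heg)
              · rfl
              · exact absurd hvl (hrem l hl').2.2.2.2
            · obtain ⟨l, ⟨hlQ, hvl⟩, hluniq⟩ := huniq v
              have hlx : l ≠ [x] := fun h => hvx (by simpa [h] using hvl)
              have hlp : l ≠ p := by
                intro h; subst h
                rcases (hmem v).mp hvl with rfl | rfl | rfl
                exacts [hve rfl, hvf rfl, hvg rfl]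
              refine ⟨l, ⟨(hmemQ' _).mpr (Or.inr (Or.inr (Finset.mem_erase.mpr ⟨hlp, Finset.mem_erase.mpr ⟨hlx, hlQ⟩⟩))), hvl⟩, ?_⟩
              rintro l' ⟨hl', hvl'⟩
              rcases (hmemQ' l').mp hl' with rfl | rfl | hl''
              · simp at hvl'; rcases hvl' with rfl | rfl; exact absurd rfl hvx; exact absurd rfl hve
              · simp at hvl'; rcases hvl' with rfl | rfl; exact absurd rfl hvf; exact absurd rfl hvg
              · exact hluniq l' ⟨(hrem l' hl'').1, hvl'⟩
  have hsub : Q'.filter (fun l => l.length = 1) ⊆ (Q.filter (fun l => l.length = 1)).erase [x] := by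
    intro l hl
    obtain ⟨hl1, hl2⟩ := Finset.mem_filter.mp hl
    rcases (hmemQ' l).mp hl1 with rfl | rfl | hl'
    · simp at hl2
    · simp at hl2
    · refine Finset.mem_erase.mpr ⟨Finset.ne_of_mem_erase (Finset.mem_of_mem_erase hl'), Finset.mem_filter.mpr ⟨(hrem l hl').1, hl2⟩⟩
  have hxf : [x] ∈ Q.filter (fun l => l.length = 1) := Finset.mem_filter.mpr ⟨hx, by simp⟩
  have hlt : (Q'.filter (fun l => l.length = 1)).card < (Q.filter (fun l => l.length = 1)).card := by
    calc (Q'.filter (fun l => l.length = 1)).card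
        ≤ ((Q.filter (fun l => l.length = 1)).erase [x]).card := Finset.card_le_card hsub
      _ < (Q.filter (fun l => l.length = 1)).card := Finset.card_erase_lt_of_mem hxf
  exact absurd (hleast Q' hpart) (not_le.mpr hlt)

/-- in a 3-path partition with the least 1-paths, no singleton is
adjacent to an endpoint of a 3-path. -/
theorem singleton_not_adjacent_three_path_endpoint {V : Type*} [Fintype V] [DecidableEq V]
    (G : SimpleGraph V) (Q : Finset (List V))
    (hQ : G.IsPathPartition 3 Q)
    (hleast : G.HasLeastOnePaths Q) :
    ∀ x : V, [x] ∈ Q → ∀ a b c : V, [a, b, c] ∈ Q → ¬ G.Adj x a ∧ ¬ G.Adj x c := by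
  intro x hx a b c habc
  obtain ⟨⟨_, hnd, hch⟩, _⟩ := hQ.1 _ habc
  have hab : a ≠ b := by simp at hnd; tauto
  have hac : a ≠ c := by simp at hnd; tauto
  have hbc : b ≠ c := by simp at hnd; tauto
  have hAab : G.Adj a b := by simp [List.Chain', List.isChain_cons_cons] at hch; tauto
  have hAbc : G.Adj b c := by simp [List.Chain', List.isChain_cons_cons] at hch; tauto
  constructor
  · intro h
    exact key_swap G Q hQ hleast x a b c [a, b, c] hx habc (by intro v; simp; try tauto) hab hac hbc h hAbc
  · intro h
    exact key_swap G Q hQ hleast x c a b [a, b, c] hx habc (by intro v; simp; try tauto) hac.symm hbc.symm hab h hAab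
end

section
/- Let G be a simple graph, let a1-b1, a2-b2, a3-b3, a4-b4 be four pairwise vertex-disjoint 2-paths in G, and let u-w-v and u'-w'-v' be two 3-paths in G, all six paths pairwise vertex-disjoint. If (b1, a2), (b3, a4), (a1, u), (a3, u'), and (u, v') are edges of G, then the fourteen vertices involved can be partitioned into the vertex sets of four pairwise vertex-disjoint paths of order 3 and one path of order 2 in G. -/
set_option maxHeartbeats 1000000 in
/-- the replacement step of the first class of Operation 4-2-By-1-4. -/
theorem op_4_2_by_1_4_first_class {V : Type*} (G : SimpleGraph V)
    (a1 b1 a2 b2 a3 b3 a4 b4 u w v u' w' v' : V)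
    (h1 : G.Adj a1 b1) (h2 : G.Adj a2 b2) (h3 : G.Adj a3 b3) (h4 : G.Adj a4 b4)
    (h5 : G.Adj u w) (h6 : G.Adj w v) (h7 : G.Adj u' w') (h8 : G.Adj w' v')
    (hnd : ([a1, b1, a2, b2, a3, b3, a4, b4, u, w, v, u', w', v'] : List V).Nodup)
    (e1 : G.Adj b1 a2) (e2 : G.Adj b3 a4) (e3 : G.Adj a1 u) (e4 : G.Adj a3 u')
    (e5 : G.Adj u v') :
    ∃ l1 l2 l3 l4 m : List V,
      G.IsPathList l1 ∧ l1.length = 3 ∧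
      G.IsPathList l2 ∧ l2.length = 3 ∧
      G.IsPathList l3 ∧ l3.length = 3 ∧
      G.IsPathList l4 ∧ l4.length = 3 ∧
      G.IsPathList m ∧ m.length = 2 ∧
      (l1 ++ l2 ++ l3 ++ l4 ++ m).Perm
        [a1, b1, a2, b2, a3, b3, a4, b4, u, w, v, u', w', v'] := by
  have hnd0 := hnd
  simp only [List.nodup_cons, List.mem_cons, List.mem_singleton, List.not_mem_nil,
    not_or, List.nodup_nil, and_true] at hnd
  refine ⟨[b1, a2, b2], [b3, a4, b4], [a1, u, v'], [a3, u', w'], [w, v],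
    ⟨by simp, ?_, by simp [List.Chain', e1, h2]⟩, rfl,
    ⟨by simp, ?_, by simp [List.Chain', e2, h4]⟩, rfl,
    ⟨by simp, ?_, by simp [List.Chain', e3, e5]⟩, rfl,
    ⟨by simp, ?_, by simp [List.Chain', e4, h7]⟩, rfl,
    ⟨by simp, ?_, by simp [List.Chain', h6]⟩, rfl, ?_⟩
  · simp only [List.nodup_cons, List.mem_cons, List.mem_singleton, List.not_mem_nil,
      not_or, List.nodup_nil, and_true]
    tauto
  · simp only [List.nodup_cons, List.mem_cons, List.mem_singleton, List.not_mem_nil,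
      not_or, List.nodup_nil, and_true]
    tauto
  · simp only [List.nodup_cons, List.mem_cons, List.mem_singleton, List.not_mem_nil,
      not_or, List.nodup_nil, and_true]
    tauto
  · simp only [List.nodup_cons, List.mem_cons, List.mem_singleton, List.not_mem_nil,
      not_or, List.nodup_nil, and_true]
    tauto
  · simp only [List.nodup_cons, List.mem_cons, List.mem_singleton, List.not_mem_nil,
      not_or, List.nodup_nil, and_true]
    tauto
  · have hsub : ([a1, b1, a2, b2, a3, b3, a4, b4, u, w, v, u', w', v'] : List V) ⊆
        [b1, a2, b2] ++ [b3, a4, b4] ++ [a1, u, v'] ++ [a3, u', w'] ++ [w, v] := by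
      intro x hx
      clear hnd
      simp only [List.mem_cons, List.mem_singleton, List.not_mem_nil, or_false] at hx
      simp only [List.cons_append, List.nil_append, List.mem_cons,
        List.mem_singleton, List.not_mem_nil]
      tauto
    exact ((List.subperm_of_subset hnd0 hsub).perm_of_length_le (by simp)).symm
end
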